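/- arXiv:2507.13559 — 6 statements merged into one kernel-verified Lean document; each statement's English description precedes it below -/
import Mathlib

section
/- (Erbe–Zhang) Let $k \geq 1$ be an integer and $(Q^*_n)$ a nonnegative real sequence. If $\liminf_{n\to\infty} Q^*_n > \frac{k^k}{(k+1)^{k+1}}$, then every solution of the delay difference equation $\Delta y_n + Q^*_n y_{n-k} = 0$ is oscillatory. -/
/-!
If a solution `z` were eventually positive, fix `q = k^k/(k+1)^(k+1) + ε` with `ε > 0` and
`q ≤ Qₙ` for large `n`. Then `z` is eventually nonincreasing, and an eventual bound
`z (n+1) ≤ d z n` improves itself: iterated `k` times it gives `z n ≤ d^k z (n-k)`, so the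
equation yields `d^k z (n+1) ≤ (d^k - q) z n ≤ d^k (d - ε) z n`, the last step because
`d^k (1 - d) ≤ k^k/(k+1)^(k+1)` for `d ≥ 0`. Starting from `d = 1`, after finitely many
improvements `d ≤ 0`, which contradicts positivity.
-/

open Filter

theorem one_add_pow_mul_one_sub_mul_le_one {t : ℝ} (ht : -1 ≤ t) (k : ℕ) :
    (1 + t) ^ k * (1 - k * t) ≤ 1 := by
  induction k with
  | zero => simp
  | succ k ih =>
    calc (1 + t) ^ (k + 1) * (1 - ↑(k + 1) * t)
        = (1 + t) ^ k * ((1 + t) * (1 - (k + 1) * t)) := by push_cast; ring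
      _ ≤ (1 + t) ^ k * (1 - k * t) := by
        refine mul_le_mul_of_nonneg_left ?_ (pow_nonneg (by linarith) k)
        nlinarith [sq_nonneg t]
      _ ≤ 1 := ih

theorem pow_mul_one_sub_le {d : ℝ} (hd : 0 ≤ d) (k : ℕ) :
    d ^ k * (1 - d) ≤ (k : ℝ) ^ k / ((k : ℝ) + 1) ^ (k + 1) := by
  rcases k.eq_zero_or_pos with rfl | hk
  · simpa using hd
  have hk : (0 : ℝ) < k := by exact_mod_cast hk
  -- Bernoulli at `1 + t = (k+1) d / k`, which is `1` at the maximiser `d = k/(k+1)`.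
  have ht : -1 ≤ (k + 1) * d / k - 1 := by linarith [show 0 ≤ (k + 1) * d / k by positivity]
  have key := one_add_pow_mul_one_sub_mul_le_one ht k
  have e : 1 - k * ((k + 1) * d / k - 1) = (k + 1) * (1 - d) := by field_simp; ring
  rw [add_sub_cancel, e, div_pow, div_mul_eq_mul_div, div_le_one (by positivity)] at key
  rw [le_div_iff₀ (by positivity)]
  calc d ^ k * (1 - d) * ((k : ℝ) + 1) ^ (k + 1)
      = ((k + 1) * d) ^ k * ((k + 1) * (1 - d)) := by rw [mul_pow, pow_succ]; ring
    _ ≤ (k : ℝ) ^ k := key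

theorem Filter.Eventually.atTop_comp_sub {p : ℤ → Prop} (h : ∀ᶠ n in atTop, p n) (m : ℤ) :
    ∀ᶠ n in atTop, p (n - m) :=
  (tendsto_atTop_add_const_right atTop (-m) tendsto_id).eventually h |>.mono fun n hn => by
    simpa [sub_eq_add_neg] using hn

theorem not_eventually_succ_le_mul_of_nonpos {z : ℤ → ℝ} {d : ℝ} (hd : d ≤ 0)
    (hpos : ∀ᶠ n in atTop, 0 < z n) : ¬ ∀ᶠ n in atTop, z (n + 1) ≤ d * z n := by
  intro h
  obtain ⟨n, hn, hzn, hzn1⟩ := (h.and (hpos.and (hpos.atTop_comp_sub (-1)))).exists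
  rw [sub_neg_eq_add] at hzn1
  nlinarith

theorem eventually_le_pow_mul_sub {z : ℤ → ℝ} {d : ℝ} (hd : 0 ≤ d)
    (h : ∀ᶠ n in atTop, z (n + 1) ≤ d * z n) (j : ℕ) :
    ∀ᶠ n in atTop, z n ≤ d ^ j * z (n - j) := by
  induction j with
  | zero => simp
  | succ j ih =>
    filter_upwards [ih, h.atTop_comp_sub (j + 1)] with n hj hstep
    have e : n - (j + 1) + 1 = n - j := by ring
    rw [e] at hstep
    calc z n ≤ d ^ j * z (n - j) := hj
      _ ≤ d ^ j * (d * z (n - ↑(j + 1))) := by push_cast; gcongr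
      _ = d ^ (j + 1) * z (n - ↑(j + 1)) := by ring

section DelayEquation

variable {k : ℕ} {Q z : ℤ → ℝ}

theorem eventually_succ_le_of_eventually_pos
    (heq : ∀ n : ℤ, z (n + 1) - z n + Q n * z (n - k) = 0)
    (hQ : ∀ᶠ n in atTop, 0 ≤ Q n) (hpos : ∀ᶠ n in atTop, 0 < z n) :
    ∀ᶠ n in atTop, z (n + 1) ≤ z n := by
  filter_upwards [hQ, hpos.atTop_comp_sub k] with n hQn hzk
  nlinarith [heq n]

theorem eventually_succ_le_sub_mul (heq : ∀ n : ℤ, z (n + 1) - z n + Q n * z (n - k) = 0)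
    {ε : ℝ} (hε : 0 ≤ ε) (hQ : ∀ᶠ n in atTop, (k : ℝ) ^ k / ((k : ℝ) + 1) ^ (k + 1) + ε ≤ Q n)
    (hpos : ∀ᶠ n in atTop, 0 < z n) {d : ℝ} (hd1 : d ≤ 1)
    (h : ∀ᶠ n in atTop, z (n + 1) ≤ d * z n) :
    ∀ᶠ n in atTop, z (n + 1) ≤ (d - ε) * z n := by
  rcases le_or_gt d 0 with hd | hd
  · exact absurd h (not_eventually_succ_le_mul_of_nonpos hd hpos)
  have hdk : 0 < d ^ k := pow_pos hd k
  have hbound : d ^ k - ((k : ℝ) ^ k / ((k : ℝ) + 1) ^ (k + 1) + ε) ≤ d ^ k * (d - ε) := by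
    nlinarith [pow_mul_one_sub_le hd.le k, pow_le_one₀ (n := k) hd.le hd1]
  have hc : 0 ≤ (k : ℝ) ^ k / ((k : ℝ) + 1) ^ (k + 1) := by positivity
  filter_upwards [eventually_le_pow_mul_sub hd.le h k, hQ, hpos, hpos.atTop_comp_sub k]
    with n hchain hQn hzn hzk
  refine le_of_mul_le_mul_left ?_ hdk
  calc d ^ k * z (n + 1) = d ^ k * z n - Q n * (d ^ k * z (n - k)) := by
        linear_combination d ^ k * heq n
    _ ≤ d ^ k * z n - ((k : ℝ) ^ k / ((k : ℝ) + 1) ^ (k + 1) + ε) * z n := by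
      have := mul_le_mul hQn hchain hzn.le (by linarith)
      linarith
    _ ≤ d ^ k * ((d - ε) * z n) := by nlinarith

theorem not_eventually_pos (heq : ∀ n : ℤ, z (n + 1) - z n + Q n * z (n - k) = 0)
    (hQ : ∀ n, 0 ≤ Q n) (hlim : (k : ℝ) ^ k / ((k : ℝ) + 1) ^ (k + 1) < liminf Q atTop) :
    ¬ ∀ᶠ n in atTop, 0 < z n := by
  intro hpos
  set c : ℝ := (k : ℝ) ^ k / ((k : ℝ) + 1) ^ (k + 1)
  obtain ⟨q, hcq, hqQ⟩ := exists_between hlim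
  have hQq : ∀ᶠ n in atTop, c + (q - c) ≤ Q n :=
    (eventually_lt_of_lt_liminf hqQ (isBoundedUnder_of_eventually_ge (.of_forall hQ))).mono
      fun n hn => by linarith
  have hε : 0 < q - c := by linarith
  have descent (m : ℕ) : ∀ᶠ n in atTop, z (n + 1) ≤ (1 - m * (q - c)) * z n := by
    induction m with
    | zero => simpa using eventually_succ_le_of_eventually_pos heq (.of_forall hQ) hpos
    | succ m ih =>
      have hd1 : 1 - m * (q - c) ≤ 1 := sub_le_self _ (mul_nonneg m.cast_nonneg hε.le)
      simpa [add_mul, sub_sub] using eventually_succ_le_sub_mul heq hε.le hQq hpos hd1 ih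
  obtain ⟨m, hm⟩ := exists_nat_gt (1 / (q - c))
  have hm : 1 < m * (q - c) := (div_lt_iff₀ hε).mp hm
  exact not_eventually_succ_le_mul_of_nonpos (by linarith) hpos (descent m)

end DelayEquation

theorem pos_or_neg_of_mul_succ_pos {y : ℤ → ℝ} {M : ℤ} (h : ∀ n, M ≤ n → 0 < y n * y (n + 1)) :
    (∀ n, M ≤ n → 0 < y n) ∨ (∀ n, M ≤ n → y n < 0) := by
  rcases (left_ne_zero_of_mul (h M le_rfl).ne').lt_or_gt with hM | hM
  · right
    intro n hn
    induction n, hn using Int.leInduction with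
    | base => exact hM
    | succ n hn ih => exact neg_of_mul_pos_right (h n hn) ih.le
  · left
    intro n hn
    induction n, hn using Int.leInduction with
    | base => exact hM
    | succ n hn ih => exact pos_of_mul_pos_right (h n hn) ih.le

theorem stmt_5_general (k : ℕ) (Q : ℤ → ℝ) (hQ : ∀ n, 0 ≤ Q n)
    (hlim : (k : ℝ) ^ k / ((k : ℝ) + 1) ^ (k + 1) < Filter.liminf Q Filter.atTop)
    (y : ℤ → ℝ)
    (heq : ∀ n : ℤ, y (n + 1) - y n + Q n * y (n - k) = 0) :
    ∀ M : ℤ, ∃ n, M ≤ n ∧ y n * y (n + 1) ≤ 0 := by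
  by_contra! h
  obtain ⟨M, hM⟩ := h
  rcases pos_or_neg_of_mul_succ_pos hM with hpos | hneg
  · exact not_eventually_pos heq hQ hlim (eventually_atTop.2 ⟨M, hpos⟩)
  · have heq_neg (n : ℤ) : (-y) (n + 1) - (-y) n + Q n * (-y) (n - k) = 0 := by
      simp only [Pi.neg_apply]; linear_combination -heq n
    exact not_eventually_pos heq_neg hQ hlim
      (eventually_atTop.2 ⟨M, fun n hn => neg_pos.2 (hneg n hn)⟩)

/-- (Erbe–Zhang) If `liminf Qₙ* > kᵏ/(k+1)^{k+1}`, every nonzero solution of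
`Δ yₙ + Qₙ* y_{n-k} = 0` is oscillatory. -/
theorem stmt_5 (k : ℕ) (hk : 1 ≤ k) (Q : ℤ → ℝ) (hQ : ∀ n, 0 ≤ Q n)
    (hlim : (k : ℝ) ^ k / ((k : ℝ) + 1) ^ (k + 1) < Filter.liminf Q Filter.atTop)
    (y : ℤ → ℝ)
    (heq : ∀ n : ℤ, y (n + 1) - y n + Q n * y (n - k) = 0)
    (hne : ∃ n, y n ≠ 0) :
    ∀ M : ℤ, ∃ n, M ≤ n ∧ y n * y (n + 1) ≤ 0 :=
  stmt_5_general k Q hQ hlim y heq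
end

section
/- (Ladas–Philos–Sficas) Let $k \geq 1$ be an integer and $(Q^*_n)$ a nonnegative real sequence. If $\liminf_{n\to\infty} \sum_{j=n-k}^{n-1} Q^*_j > \left(\frac{k}{k+1}\right)^{k+1}$, then every solution of $\Delta y_n + Q^*_n y_{n-k} = 0$ is oscillatory. -/
/-!
Suppose a solution `z` were eventually positive. Its successive ratios `u n = z (n+1) / z n` then
eventually lie in `(0, 1]`, and the equation reads `Q n = (1 - u n) * ∏_{i=n-k}^{n-1} u i`.
If the window sums `S n = ∑_{i=n-k}^{n-1} u i` are eventually at most `s`, AM-GM bounds each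
window product by `(s/k)^k`, hence `∑_{j=n-k}^{n-1} Q j ≤ (s/k)^k (k - S n)`. Since
`(k - s) (s/k)^k ≤ (k/(k+1))^(k+1)`, a margin `δ` of the liminf over `(k/(k+1))^(k+1)` forces
`S n ≤ s - δ` eventually. Starting from `s = k` and iterating, the positive sums `S n` would
eventually drop below zero.
-/

open Finset Filter

theorem Real.prod_le_sum_div_card_pow {ι : Type*} (s : Finset ι) {f : ι → ℝ}
    (hf : ∀ i ∈ s, 0 ≤ f i) : ∏ i ∈ s, f i ≤ ((∑ i ∈ s, f i) / #s) ^ #s := by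
  rcases s.eq_empty_or_nonempty with rfl | hs
  · simp
  have hcard : (0 : ℝ) < #s := by exact_mod_cast hs.card_pos
  have amgm := Real.geom_mean_le_arith_mean_weighted s (fun _ => (#s : ℝ)⁻¹) f
    (fun _ _ => by positivity) (by simp [hcard.ne']) hf
  rw [Real.finsetProd_rpow s f hf, ← mul_sum, inv_mul_eq_div] at amgm
  calc ∏ i ∈ s, f i = ((∏ i ∈ s, f i) ^ (#s : ℝ)⁻¹) ^ #s := by
        rw [← Real.rpow_natCast, ← Real.rpow_mul (prod_nonneg hf), inv_mul_cancel₀ hcard.ne',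
          Real.rpow_one]
    _ ≤ _ := pow_le_pow_left₀ (Real.rpow_nonneg (prod_nonneg hf) _) amgm _

theorem sub_mul_div_pow_le (k : ℕ) {s : ℝ} (hs : 0 ≤ s) :
    ((k : ℝ) - s) * (s / k) ^ k ≤ ((k : ℝ) / (k + 1)) ^ (k + 1) := by
  rcases lt_or_ge (k : ℝ) s with hks | hsk
  · exact (mul_nonpos_of_nonpos_of_nonneg (by linarith) (by positivity)).trans (by positivity)
  rcases Nat.eq_zero_or_pos k with rfl | hk
  · simpa using hs
  -- AM-GM for `k` copies of `s / k` and one copy of `k - s`, whose mean is `k / (k + 1)`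
  set f : ℕ → ℝ := fun i => if i < k then s / k else k - s
  have amgm := Real.prod_le_sum_div_card_pow (range (k + 1)) (f := f) fun i _ => by
    simp only [f]; split_ifs <;> [positivity; linarith]
  have hprod : ∏ i ∈ range k, f i = (s / k) ^ k := by
    rw [prod_congr rfl fun i hi => if_pos (mem_range.1 hi), prod_const, card_range]
  have hsum : ∑ i ∈ range k, f i = s := by
    rw [sum_congr rfl fun i hi => if_pos (mem_range.1 hi), sum_const, card_range, nsmul_eq_mul]
    field_simp
  rw [prod_range_succ, sum_range_succ, hprod, hsum, card_range] at amgm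
  simpa [f, mul_comm] using amgm

theorem lt_sub_of_add_lt_div_pow_mul {k : ℕ} {s S δ : ℝ} (hs : 0 ≤ s) (hsk : s ≤ k)
    (hδ : 0 ≤ δ)
    (h : ((k : ℝ) / (k + 1)) ^ (k + 1) + δ < (s / k) ^ k * (k - S)) : S < s - δ := by
  have hmax := sub_mul_div_pow_le k hs
  have hp₀ : 0 ≤ (s / k) ^ k := by positivity
  have hp₁ : (s / k) ^ k ≤ 1 :=
    pow_le_one₀ (by positivity) (div_le_one_of_le₀ hsk (by positivity))
  by_contra! hS
  nlinarith [mul_nonneg hp₀ (sub_nonneg.2 hS), mul_nonneg hδ (sub_nonneg.2 hp₁)]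

theorem eventually_forall_mem_Ico_sub {P : ℤ → Prop} (k : ℕ) (h : ∀ᶠ j in atTop, P j) :
    ∀ᶠ n : ℤ in atTop, ∀ j ∈ Ico (n - k) n, P j := by
  obtain ⟨N, hN⟩ := eventually_atTop.1 h
  exact eventually_atTop.2 ⟨N + k, fun n hn j hj => hN j (by rw [mem_Ico] at hj; omega)⟩

section Ratios

variable {k : ℕ} {u Q : ℤ → ℝ}

theorem eventually_sum_Ico_lt_sub {s δ : ℝ} (hs : 0 ≤ s) (hsk : s ≤ k) (hδ : 0 ≤ δ)
    (hu_nonneg : ∀ᶠ n : ℤ in atTop, 0 ≤ u n) (hu_le : ∀ᶠ n : ℤ in atTop, u n ≤ 1)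
    (hQ : ∀ᶠ n : ℤ in atTop, Q n = (1 - u n) * ∏ i ∈ Ico (n - k) n, u i)
    (hW : ∀ᶠ n : ℤ in atTop, ((k : ℝ) / (k + 1)) ^ (k + 1) + δ < ∑ j ∈ Ico (n - k) n, Q j)
    (hS : ∀ᶠ n : ℤ in atTop, ∑ i ∈ Ico (n - k) n, u i ≤ s) :
    ∀ᶠ n : ℤ in atTop, ∑ i ∈ Ico (n - k) n, u i < s - δ := by
  filter_upwards [hW, eventually_forall_mem_Ico_sub k
      (hQ.and (hu_le.and (hS.and (eventually_forall_mem_Ico_sub k hu_nonneg))))]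
    with n hWn hwin
  have hQ_le : ∀ j ∈ Ico (n - k) n, Q j ≤ (1 - u j) * (s / k) ^ k := by
    intro j hj
    obtain ⟨hQj, huj, hSj, hu_win⟩ := hwin j hj
    have hprod : ∏ i ∈ Ico (j - k) j, u i ≤ (s / k) ^ k :=
      calc ∏ i ∈ Ico (j - k) j, u i ≤ ((∑ i ∈ Ico (j - k) j, u i) / k) ^ k := by
            simpa using Real.prod_le_sum_div_card_pow _ hu_win
        _ ≤ (s / k) ^ k := by
          have hSj_nonneg := sum_nonneg hu_win
          gcongr
    rw [hQj]
    exact mul_le_mul_of_nonneg_left hprod (by linarith)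
  refine lt_sub_of_add_lt_div_pow_mul hs hsk hδ (hWn.trans_le ?_)
  calc ∑ j ∈ Ico (n - k) n, Q j ≤ ∑ j ∈ Ico (n - k) n, (1 - u j) * (s / k) ^ k :=
        sum_le_sum hQ_le
    _ = (s / k) ^ k * (k - ∑ j ∈ Ico (n - k) n, u j) := by
      rw [← sum_mul, sum_sub_distrib, sum_const]
      simp [mul_comm]

theorem not_eventually_lt_sum_Ico (hk : 0 < k) {α : ℝ}
    (hα : ((k : ℝ) / (k + 1)) ^ (k + 1) < α)
    (hu_pos : ∀ᶠ n : ℤ in atTop, 0 < u n) (hu_le : ∀ᶠ n : ℤ in atTop, u n ≤ 1)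
    (hQ : ∀ᶠ n : ℤ in atTop, Q n = (1 - u n) * ∏ i ∈ Ico (n - k) n, u i) :
    ¬ ∀ᶠ n : ℤ in atTop, α < ∑ j ∈ Ico (n - k) n, Q j := by
  intro hW
  set δ := α - ((k : ℝ) / (k + 1)) ^ (k + 1)
  have hδ : 0 < δ := sub_pos.2 hα
  have hW' : ∀ᶠ n : ℤ in atTop, ((k : ℝ) / (k + 1)) ^ (k + 1) + δ < ∑ j ∈ Ico (n - k) n, Q j :=
    by simpa [δ] using hW
  have hS_pos : ∀ᶠ n : ℤ in atTop, 0 < ∑ i ∈ Ico (n - k) n, u i :=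
    (eventually_forall_mem_Ico_sub k hu_pos).mono fun n h =>
      sum_pos h ⟨n - 1, by rw [mem_Ico]; omega⟩
  have hS_le : ∀ m : ℕ, ∀ᶠ n : ℤ in atTop, ∑ i ∈ Ico (n - k) n, u i ≤ k - m * δ := by
    intro m
    induction m with
    | zero =>
      refine (eventually_forall_mem_Ico_sub k hu_le).mono fun n h => ?_
      simpa using sum_le_sum h
    | succ m ih =>
      obtain ⟨n, hn_pos, hn_le⟩ := (hS_pos.and ih).exists
      refine (eventually_sum_Ico_lt_sub (by linarith) (sub_le_self _ (by positivity)) hδ.le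
        (hu_pos.mono fun n h => h.le) hu_le hQ hW' ih).mono fun n h => ?_
      push_cast
      linarith
  obtain ⟨m, hm⟩ := exists_nat_gt ((k : ℝ) / δ)
  obtain ⟨n, hn_pos, hn_le⟩ := (hS_pos.and (hS_le m)).exists
  rw [div_lt_iff₀ hδ] at hm
  linarith

end Ratios

theorem mul_prod_Ico_div_eq {z : ℤ → ℝ} {a b : ℤ} (hab : a ≤ b)
    (hz : ∀ i ∈ Ico a b, z i ≠ 0) :
    z a * ∏ i ∈ Ico a b, z (i + 1) / z i = z b := by
  induction b, hab using Int.leInduction with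
  | base => simp
  | succ b hab ih =>
    have hzb : z b ≠ 0 := hz b (by rw [mem_Ico]; omega)
    rw [← prod_Ico_mul_eq_prod_Ico_add_one hab, ← mul_assoc,
      ih fun i hi => hz i (by rw [mem_Ico] at hi ⊢; omega), mul_div_cancel₀ _ hzb]

theorem pos_of_mul_succ_pos {y : ℤ → ℝ} {M : ℤ} (h : ∀ n, M ≤ n → 0 < y n * y (n + 1))
    (hM : 0 < y M) : ∀ n, M ≤ n → 0 < y n :=
  Int.leInduction hM fun n hn ih => pos_of_mul_pos_right (h n hn) ih.le

section Solution

variable {k : ℕ} {Q z : ℤ → ℝ}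

theorem eventually_div_pos (hz : ∀ᶠ n : ℤ in atTop, 0 < z n) :
    ∀ᶠ n : ℤ in atTop, 0 < z (n + 1) / z n := by
  obtain ⟨M, hM⟩ := eventually_atTop.1 hz
  exact eventually_atTop.2 ⟨M, fun n hn => div_pos (hM _ (by omega)) (hM n hn)⟩

theorem eventually_div_le_one (hQ : ∀ n, 0 ≤ Q n)
    (heq : ∀ n : ℤ, z (n + 1) - z n + Q n * z (n - k) = 0) (hz : ∀ᶠ n : ℤ in atTop, 0 < z n) :
    ∀ᶠ n : ℤ in atTop, z (n + 1) / z n ≤ 1 := by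
  obtain ⟨M, hM⟩ := eventually_atTop.1 hz
  refine eventually_atTop.2 ⟨M + k, fun n hn => (div_le_one (hM n (by omega))).2 ?_⟩
  nlinarith [heq n, hQ n, hM (n - k) (by omega)]

theorem eventually_eq_one_sub_div_mul_prod
    (heq : ∀ n : ℤ, z (n + 1) - z n + Q n * z (n - k) = 0) (hz : ∀ᶠ n : ℤ in atTop, 0 < z n) :
    ∀ᶠ n : ℤ in atTop,
      Q n = (1 - z (n + 1) / z n) * ∏ i ∈ Ico (n - k) n, z (i + 1) / z i := by
  obtain ⟨M, hM⟩ := eventually_atTop.1 hz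
  refine eventually_atTop.2 ⟨M + k, fun n hn => ?_⟩
  have hzn := (hM n (by omega)).ne'
  have hzk := (hM (n - k) (by omega)).ne'
  have htele := mul_prod_Ico_div_eq (z := z) (a := n - k) (b := n) (by omega)
    fun i hi => (hM i (by rw [mem_Ico] at hi; omega)).ne'
  rw [← mul_left_inj' hzk]
  calc Q n * z (n - k) = (1 - z (n + 1) / z n) * z n := by
        rw [sub_mul, one_mul, div_mul_cancel₀ _ hzn]
        linear_combination heq n
    _ = _ := by rw [← htele]; ring

theorem not_eventually_pos_of_lt_liminf (hk : 0 < k) (hQ : ∀ n, 0 ≤ Q n)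
    (hlim : ((k : ℝ) / ((k : ℝ) + 1)) ^ (k + 1) <
      liminf (fun n : ℤ => ∑ j ∈ Ico (n - k) n, Q j) atTop)
    (heq : ∀ n : ℤ, z (n + 1) - z n + Q n * z (n - k) = 0) :
    ¬ ∀ᶠ n : ℤ in atTop, 0 < z n := by
  intro hz
  obtain ⟨α, hα, hα_lt⟩ := exists_between hlim
  have hW := eventually_lt_of_lt_liminf hα_lt
    (isBoundedUnder_of ⟨0, fun n => sum_nonneg fun j _ => hQ j⟩)
  exact not_eventually_lt_sum_Ico hk hα (eventually_div_pos hz) (eventually_div_le_one hQ heq hz)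
    (eventually_eq_one_sub_div_mul_prod heq hz) hW

end Solution

theorem stmt_6_general (k : ℕ) (Q : ℤ → ℝ) (hQ : ∀ n, 0 ≤ Q n)
    (hlim : ((k : ℝ) / ((k : ℝ) + 1)) ^ (k + 1) <
      Filter.liminf (fun n : ℤ => ∑ j ∈ Finset.Ico (n - k) n, Q j) Filter.atTop)
    (y : ℤ → ℝ)
    (heq : ∀ n : ℤ, y (n + 1) - y n + Q n * y (n - k) = 0) :
    ∀ M : ℤ, ∃ n, M ≤ n ∧ y n * y (n + 1) ≤ 0 := by
  obtain rfl | hk := k.eq_zero_or_pos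
  · simp at hlim
  intro M
  by_contra! hM
  rcases (left_ne_zero_of_mul (hM M le_rfl).ne').lt_or_gt with hneg | hpos
  · refine not_eventually_pos_of_lt_liminf hk hQ hlim (z := -y)
      (fun n => by simp only [Pi.neg_apply]; linear_combination -heq n) ?_
    exact eventually_atTop.2 ⟨M, pos_of_mul_succ_pos (fun n hn => by simpa using hM n hn)
      (neg_pos.2 hneg)⟩
  · exact not_eventually_pos_of_lt_liminf hk hQ hlim heq
      (eventually_atTop.2 ⟨M, pos_of_mul_succ_pos hM hpos⟩)

/-- (Ladas–Philos–Sficas) If `liminf ∑_{j=n-k}^{n-1} Qⱼ* > (k/(k+1))^{k+1}`,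
every nonzero solution of `Δ yₙ + Qₙ* y_{n-k} = 0` is oscillatory. -/
theorem stmt_6 (k : ℕ) (hk : 1 ≤ k) (Q : ℤ → ℝ) (hQ : ∀ n, 0 ≤ Q n)
    (hlim : ((k : ℝ) / ((k : ℝ) + 1)) ^ (k + 1) <
      Filter.liminf (fun n : ℤ => ∑ j ∈ Finset.Ico (n - k) n, Q j) Filter.atTop)
    (y : ℤ → ℝ)
    (heq : ∀ n : ℤ, y (n + 1) - y n + Q n * y (n - k) = 0)
    (hne : ∃ n, y n ≠ 0) :
    ∀ M : ℤ, ∃ n, M ≤ n ∧ y n * y (n + 1) ≤ 0 :=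
  stmt_6_general k Q hQ hlim y heq
end

section
/- (Öcalan–Akin oscillation) Let $\ell \geq 2$ be an integer and $(Q^*_n)$ a real sequence. If $\limsup_{n\to\infty} Q^*_n < -\frac{(\ell-1)^{\ell-1}}{\ell^{\ell}}$, then every solution of the advanced difference equation $\Delta y_n + Q^*_n y_{n+\ell} = 0$ is oscillatory. -/
/-!
Let `c₀ = (ℓ-1)^(ℓ-1)/ℓ^ℓ`; it is the maximum of `(x - 1)/x^ℓ` over `x ≥ 1`. If a solution
`z` were eventually positive, then eventually `Q n ≤ -(c₀ + ε)` gives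
`z (n+1) ≥ z n + (c₀ + ε) z (n+ℓ)`. Whenever the ratios `z (n+1)/z n` are bounded below by
`a ≥ 1`, this bounds them below by `1 + (c₀ + ε) a^ℓ ≥ a + ε`, so they are bounded below by
`1 + kε` for every `k`, which is absurd.
-/

open Filter

lemma sub_one_le_mul_pow (ℓ : ℕ) (hℓ : 2 ≤ ℓ) {x : ℝ} (hx : 0 ≤ x) :
    x - 1 ≤ ((ℓ : ℝ) - 1) ^ (ℓ - 1) / (ℓ : ℝ) ^ ℓ * x ^ ℓ := by
  have hℓ' : (2 : ℝ) ≤ ℓ := by exact_mod_cast hℓ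
  have hs : 0 ≤ ((ℓ : ℝ) - 1) * x / ℓ := div_nonneg (mul_nonneg (by linarith) hx) (by linarith)
  have hbernoulli : ((ℓ : ℝ) - 1) * (x - 1) ≤ (((ℓ : ℝ) - 1) * x / ℓ) ^ ℓ := by
    calc ((ℓ : ℝ) - 1) * (x - 1) = 1 + ℓ * (((ℓ : ℝ) - 1) * x / ℓ - 1) := by
          field_simp; ring
      _ ≤ (1 + (((ℓ : ℝ) - 1) * x / ℓ - 1)) ^ ℓ := one_add_mul_le_pow (by linarith) ℓ
      _ = (((ℓ : ℝ) - 1) * x / ℓ) ^ ℓ := by rw [add_sub_cancel]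
  have hpow : (((ℓ : ℝ) - 1) * x / ℓ) ^ ℓ =
      ((ℓ : ℝ) - 1) * (((ℓ : ℝ) - 1) ^ (ℓ - 1) / (ℓ : ℝ) ^ ℓ * x ^ ℓ) := by
    have hsucc : ((ℓ : ℝ) - 1) ^ ℓ = ((ℓ : ℝ) - 1) * ((ℓ : ℝ) - 1) ^ (ℓ - 1) := by
      rw [← pow_succ', Nat.sub_add_cancel (by omega)]
    rw [div_pow, mul_pow, hsucc]
    ring
  rw [hpow] at hbernoulli
  exact le_of_mul_le_mul_left hbernoulli (by linarith)

section DifferenceInequality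

variable {z : ℤ → ℝ} {N : ℤ}

lemma pow_mul_le_of_forall_mul_le {a : ℝ} (ha : 0 ≤ a)
    (hgrowth : ∀ n, N ≤ n → a * z n ≤ z (n + 1)) (j : ℕ) {n : ℤ} (hn : N ≤ n) :
    a ^ j * z n ≤ z (n + j) := by
  induction j with
  | zero => simp
  | succ j ih =>
    calc a ^ (j + 1) * z n = a * (a ^ j * z n) := by ring
      _ ≤ a * z (n + j) := mul_le_mul_of_nonneg_left ih ha
      _ ≤ z (n + j + 1) := hgrowth _ (by omega)
      _ = z (n + (j + 1 : ℕ)) := by push_cast; ring_nf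

variable {ℓ : ℕ} {c ε : ℝ}
  (hstep : ∀ n, N ≤ n → z n + (c + ε) * z (n + ℓ) ≤ z (n + 1))
  (hpos : ∀ n, N ≤ n → 0 < z n)
  (hc : ∀ x : ℝ, 0 ≤ x → x - 1 ≤ c * x ^ ℓ)
include hstep hpos hc

lemma add_mul_le_of_mul_le (hε : 0 ≤ ε) {a : ℝ} (ha : 1 ≤ a)
    (hgrowth : ∀ n, N ≤ n → a * z n ≤ z (n + 1)) {n : ℤ} (hn : N ≤ n) :
    (a + ε) * z n ≤ z (n + 1) := by
  have hcε : 0 ≤ c + ε := by linarith [show 0 ≤ c by simpa using hc 1 zero_le_one]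
  have hratio : a + ε ≤ 1 + (c + ε) * a ^ ℓ := by
    nlinarith [hc a (by linarith), one_le_pow₀ (n := ℓ) ha]
  have hak : a ^ ℓ * z n ≤ z (n + ℓ) :=
    pow_mul_le_of_forall_mul_le (by linarith) hgrowth ℓ hn
  calc (a + ε) * z n ≤ (1 + (c + ε) * a ^ ℓ) * z n := by gcongr; exact (hpos n hn).le
    _ = z n + (c + ε) * (a ^ ℓ * z n) := by ring
    _ ≤ z n + (c + ε) * z (n + ℓ) := by gcongr
    _ ≤ z (n + 1) := hstep n hn

lemma one_add_mul_le_of_difference_le (hε : 0 ≤ ε) (k : ℕ) {n : ℤ} (hn : N ≤ n) :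
    (1 + k * ε) * z n ≤ z (n + 1) := by
  induction k generalizing n with
  | zero =>
    have hcε : 0 ≤ c + ε := by linarith [show 0 ≤ c by simpa using hc 1 zero_le_one]
    simpa using (le_add_of_nonneg_right (mul_nonneg hcε (hpos (n + ℓ) (by omega)).le)).trans
      (hstep n hn)
  | succ k ih =>
    have h := add_mul_le_of_mul_le hstep hpos hc hε (a := 1 + k * ε)
      (by simp only [le_add_iff_nonneg_right]; positivity) (fun m hm ↦ ih hm) hn
    push_cast
    linarith

lemma false_of_difference_le_of_pos (hε : 0 < ε) : False := by
  obtain ⟨k, hk⟩ := exists_nat_gt ((z (N + 1) / z N - 1) / ε)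
  have := one_add_mul_le_of_difference_le hstep hpos hc hε.le k le_rfl
  rw [div_lt_iff₀ hε, sub_lt_iff_lt_add', div_lt_iff₀ (hpos N le_rfl)] at hk
  linarith

end DifferenceInequality

lemma exists_eventually_le_sub_of_limsup_lt {Q : ℤ → ℝ} {b : ℝ} (h : limsup Q atTop < b)
    (hb : b ≤ 0) : ∃ ε > 0, ∀ᶠ n in atTop, Q n ≤ b - ε := by
  -- an unbounded `Q` has the junk `limsup` `0`
  have hbdd : IsBoundedUnder (· ≤ ·) atTop Q := by
    by_contra hunbdd
    rw [Real.limsup_of_not_isBoundedUnder hunbdd] at h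
    linarith
  refine ⟨(b - limsup Q atTop) / 2, by linarith, ?_⟩
  filter_upwards [eventually_lt_of_limsup_lt (b := (b + limsup Q atTop) / 2) (by linarith) hbdd]
    with n hn
  linarith

lemma eventually_pos_or_neg_of_mul_succ_pos {y : ℤ → ℝ} {N : ℤ}
    (h : ∀ n, N ≤ n → 0 < y n * y (n + 1)) :
    (∀ n, N ≤ n → 0 < y n) ∨ (∀ n, N ≤ n → y n < 0) := by
  rcases lt_or_gt_of_ne (left_ne_zero_of_mul (h N le_rfl).ne') with hneg | hpos
  · exact .inr <| Int.leInduction hneg fun n hn ih ↦ by nlinarith [h n hn]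
  · exact .inl <| Int.leInduction hpos fun n hn ih ↦ by nlinarith [h n hn]

theorem stmt_8_general (ℓ : ℕ) (hℓ : 2 ≤ ℓ) (Q : ℤ → ℝ)
    (hlim : Filter.limsup Q Filter.atTop <
      -(((ℓ : ℝ) - 1) ^ (ℓ - 1) / (ℓ : ℝ) ^ ℓ))
    (y : ℤ → ℝ)
    (heq : ∀ n : ℤ, y (n + 1) - y n + Q n * y (n + ℓ) = 0) :
    ∀ M : ℤ, ∃ n, M ≤ n ∧ y n * y (n + 1) ≤ 0 := by
  set c := ((ℓ : ℝ) - 1) ^ (ℓ - 1) / (ℓ : ℝ) ^ ℓ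
  by_contra! hsign
  obtain ⟨M, hM⟩ := hsign
  have hc (x : ℝ) (hx : 0 ≤ x) : x - 1 ≤ c * x ^ ℓ := sub_one_le_mul_pow ℓ hℓ hx
  obtain ⟨ε, hε, hQ⟩ := exists_eventually_le_sub_of_limsup_lt hlim
    (neg_nonpos.mpr (by simpa using hc 1 zero_le_one))
  obtain ⟨N, hN⟩ := eventually_atTop.mp hQ
  have hstep (z : ℤ → ℝ) (hz : ∀ n, z (n + 1) - z n + Q n * z (n + ℓ) = 0)
      (hpos : ∀ n, max M N ≤ n → 0 < z n) (n : ℤ) (hn : max M N ≤ n) :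
      z n + (c + ε) * z (n + ℓ) ≤ z (n + 1) := by
    nlinarith [hz n, hN n (le_of_max_le_right hn), hpos (n + ℓ) (by omega)]
  rcases eventually_pos_or_neg_of_mul_succ_pos (N := max M N)
    (fun n hn ↦ hM n (le_of_max_le_left hn)) with hpos | hneg
  · exact false_of_difference_le_of_pos (hstep y heq hpos) hpos hc hε
  · have hneg' (n : ℤ) (hn : max M N ≤ n) : 0 < -y n := neg_pos.mpr (hneg n hn)
    exact false_of_difference_le_of_pos
      (hstep (-y) (fun n ↦ by simp only [Pi.neg_apply]; linarith [heq n]) hneg') hneg' hc hε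

/-- (Öcalan–Akin) If `limsup Qₙ* < -(ℓ-1)^{ℓ-1}/ℓ^ℓ`, every nonzero solution of
`Δ yₙ + Qₙ* y_{n+ℓ} = 0` is oscillatory. -/
theorem stmt_8 (ℓ : ℕ) (hℓ : 2 ≤ ℓ) (Q : ℤ → ℝ)
    (hlim : Filter.limsup Q Filter.atTop <
      -(((ℓ : ℝ) - 1) ^ (ℓ - 1) / (ℓ : ℝ) ^ ℓ))
    (y : ℤ → ℝ)
    (heq : ∀ n : ℤ, y (n + 1) - y n + Q n * y (n + ℓ) = 0)
    (hne : ∃ n, y n ≠ 0) :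
    ∀ M : ℤ, ∃ n, M ≤ n ∧ y n * y (n + 1) ≤ 0 :=
  stmt_8_general ℓ hℓ Q hlim y heq
end

section
/- (Győri–Ladas nonoscillation) Let $k \geq 1$ be an integer and $(Q^*_n)$ a nonnegative real sequence with $Q^*_n \leq \frac{k^k}{(k+1)^{k+1}}$ for all $n$. Then the delay difference equation $\Delta y_n + Q^*_n y_{n-k} = 0$ has a positive solution; in particular it has a nonoscillatory solution. -/
/-!
Look for a solution with `y (n + 1) = r n * y n` and `c ≤ r n ≤ 1`, where `c = k / (k + 1)`.
Then `y n = (∏ i < k, r (n - k + i)) * y (n - k)`, and the equation becomes the fixed-point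
problem `r n = 1 - Q n / ∏ i < k, r (n - k + i)` for a sequence `r` with values in `[c, 1]`.
The right-hand side is monotone in `r` and, because `Q n ≤ c ^ k * (1 - c)` is exactly the bound
`k ^ k / (k + 1) ^ (k + 1)`, maps `[c, 1]`-valued sequences to `[c, 1]`-valued sequences.
These form a complete lattice, so Knaster–Tarski provides the fixed point.
-/

open Finset

lemma pow_div_pow_succ_eq (x : ℝ) (hx : x + 1 ≠ 0) (k : ℕ) :
    x ^ k / (x + 1) ^ (k + 1) = (x / (x + 1)) ^ k * (1 - x / (x + 1)) := by
  rw [div_pow, pow_succ]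
  field_simp
  ring

def windowProd (k : ℕ) (r : ℤ → ℝ) (n : ℤ) : ℝ :=
  ∏ i ∈ range k, r (n - k + i)

lemma pow_le_windowProd {k : ℕ} {c : ℝ} (hc : 0 ≤ c) {r : ℤ → ℝ} (hr : ∀ n, c ≤ r n) (n : ℤ) :
    c ^ k ≤ windowProd k r n := by
  unfold windowProd
  simpa using prod_le_prod (s := range k) (fun _ _ => hc) (fun i _ => hr (n - k + i))

lemma windowProd_le_windowProd {k : ℕ} {r s : ℤ → ℝ} (hr : ∀ n, 0 ≤ r n) (hrs : r ≤ s) (n : ℤ) :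
    windowProd k r n ≤ windowProd k s n :=
  prod_le_prod (fun _ _ => hr _) (fun _ _ => hrs _)

lemma exists_windowProd_fixedPoint {k : ℕ} {c : ℝ} (hc0 : 0 < c) (hc1 : c ≤ 1) {Q : ℤ → ℝ}
    (hQ : ∀ n, 0 ≤ Q n) (hbd : ∀ n, Q n ≤ c ^ k * (1 - c)) :
    ∃ r : ℤ → ℝ, (∀ n, c ≤ r n) ∧ ∀ n, (1 - r n) * windowProd k r n = Q n := by
  have : Fact (c ≤ 1) := ⟨hc1⟩
  have hpos (l : ℤ → Set.Icc c 1) (n : ℤ) : 0 < windowProd k (fun m => l m) n :=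
    (pow_pos hc0 k).trans_le (pow_le_windowProd hc0.le (fun m => (l m).2.1) n)
  have hmem (l : ℤ → Set.Icc c 1) (n : ℤ) :
      1 - Q n / windowProd k (fun m => l m) n ∈ Set.Icc c 1 := by
    have hQP : Q n / windowProd k (fun m => l m) n ≤ 1 - c := by
      rw [div_le_iff₀ (hpos l n)]
      calc Q n ≤ c ^ k * (1 - c) := hbd n
        _ ≤ (1 - c) * windowProd k (fun m => l m) n := by
          rw [mul_comm]
          exact mul_le_mul_of_nonneg_left (pow_le_windowProd hc0.le (fun m => (l m).2.1) n)
            (by linarith)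
    constructor
    · linarith
    · linarith [div_nonneg (hQ n) (hpos l n).le]
  let T : (ℤ → Set.Icc c 1) →o (ℤ → Set.Icc c 1) :=
    { toFun := fun l n => ⟨_, hmem l n⟩
      monotone' := fun l m hlm n => by
        have hP := windowProd_le_windowProd (k := k) (fun i => hc0.le.trans (l i).2.1)
          (fun i => Subtype.coe_le_coe.mpr (hlm i)) n
        have := div_le_div_of_nonneg_left (hQ n) (hpos l n) hP
        exact Subtype.coe_le_coe.mp (by dsimp only; linarith) }
  obtain ⟨l, hl⟩ : ∃ l, T l = l := ⟨_, OrderHom.map_lfp T⟩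
  refine ⟨fun n => l n, fun n => (l n).2.1, fun n => ?_⟩
  have hfix : (l n : ℝ) = 1 - Q n / windowProd k (fun m => l m) n := by
    conv_lhs => rw [← hl]
    rfl
  change (1 - (l n : ℝ)) * _ = _
  rw [hfix, sub_sub_cancel, div_mul_cancel₀ _ (hpos l n).ne']

lemma exists_pos_forall_succ_eq_mul {r : ℤ → ℝ} (hr : ∀ n, 0 < r n) :
    ∃ y : ℤ → ℝ, (∀ n, 0 < y n) ∧ ∀ n, y (n + 1) = r n * y n := by
  let y : ℤ → ℝ := fun n =>
    n.inductionOn' 0 1 (fun i _ yi => r i * yi) (fun i _ yi => yi / r (i - 1))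
  have hstep (n : ℤ) : y (n + 1) = r n * y n := by
    rcases le_or_gt 0 n with hn | hn
    · exact Int.inductionOn'_add_one hn
    · have h := Int.inductionOn'_sub_one (z := n + 1) (b := 0) (zero := (1 : ℝ))
        (succ := fun i _ yi => r i * yi) (pred := fun i _ yi => yi / r (i - 1)) (by omega)
      rw [add_sub_cancel_right] at h
      change y n = y (n + 1) / r n at h
      rw [h, mul_div_cancel₀ _ (hr n).ne']
  refine ⟨y, fun n => ?_, hstep⟩
  induction n using Int.induction_on with
  | zero =>
    have hzero : y 0 = 1 := Int.inductionOn'_self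
    exact hzero ▸ one_pos
  | succ i ih => rw [hstep]; exact mul_pos (hr i) ih
  | pred i ih =>
    rw [← sub_add_cancel (-(i : ℤ)) 1, hstep] at ih
    exact pos_of_mul_pos_right ih (hr _).le

lemma add_eq_prod_mul_of_forall_succ_eq_mul {r y : ℤ → ℝ} (hy : ∀ n, y (n + 1) = r n * y n)
    (n : ℤ) (j : ℕ) : y (n + j) = (∏ i ∈ range j, r (n + i)) * y n := by
  induction j with
  | zero => simp
  | succ j ih => rw [prod_range_succ, Nat.cast_succ, ← add_assoc, hy, ih, mul_left_comm, mul_assoc]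

/-- (Győri–Ladas nonoscillation) If `Qₙ* ≤ kᵏ/(k+1)^{k+1}` for all `n`, the delay
difference equation `Δ yₙ + Qₙ* y_{n-k} = 0` has a positive solution. -/
theorem stmt_9 (k : ℕ) (hk : 1 ≤ k) (Q : ℤ → ℝ) (hQ : ∀ n, 0 ≤ Q n)
    (hbd : ∀ n, Q n ≤ (k : ℝ) ^ k / ((k : ℝ) + 1) ^ (k + 1)) :
    ∃ y : ℤ → ℝ,
      (∀ n : ℤ, y (n + 1) - y n + Q n * y (n - k) = 0) ∧
      (∀ n, 0 < y n) := by
  set c : ℝ := k / (k + 1)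
  have hc0 : 0 < c := by positivity
  have hc1 : c ≤ 1 := div_le_one_of_le₀ (by linarith) (by positivity)
  rw [pow_div_pow_succ_eq _ (by positivity)] at hbd
  obtain ⟨r, hrc, hr⟩ := exists_windowProd_fixedPoint hc0 hc1 hQ hbd
  obtain ⟨y, hy, hstep⟩ := exists_pos_forall_succ_eq_mul fun n => hc0.trans_le (hrc n)
  refine ⟨y, fun n => ?_, hy⟩
  have hwin : y n = windowProd k r n * y (n - k) := by
    simpa [windowProd] using add_eq_prod_mul_of_forall_succ_eq_mul hstep (n - k) k
  rw [hstep, hwin, ← hr]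
  ring
end

section
/- Let $(a_n), (b_n)$ be real sequences with $a_n > 0$ and $b_n < 0$, let $k \geq 1$, set $\alpha_n = \prod_{j=n_0}^{n-1} a_j^{-1}$ and $Q^*_n = -\alpha_{n+1} b_n / \alpha_{n-k} > 0$. If $\liminf_{n\to\infty} Q^*_n > \frac{k^k}{(k+1)^{k+1}}$, then every solution of $z_{n+1} = a_n z_n + b_n z_{n-k}$ is oscillatory. -/
/-!
The substitution `y n = α n * z n`, where `α n > 0` and `α (n + 1) * a n = α n`, turns the
equation into `y (n + 1) = y n - Q n * y (n - k)`, and a nonoscillatory `z` gives an eventually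
positive solution `y` or `-y`. Fix `r` with `c := k^k / (k+1)^(k+1) < r < liminf Q`. If eventually
`y n ≥ m * y (n + 1)` for some `m ≥ 1`, then `y (n - k) ≥ m^k * y n`, so
`y (n + 1) < (1 - r m^k) * y n`. Hence `r m^k < 1`, and, since `m - 1 ≤ c m^(k+1)`, the ratio
bound improves from `m` to `m + (r - c)`. Starting from `m = 1`, iterating makes `m` unbounded,
contradicting `r m^k < 1`.
-/

open Filter Finset

/-- The maximum of `(m - 1) / m ^ (k + 1)` over `m > 0`, attained at `m = (k + 1) / k`. -/
noncomputable def oscillationThreshold (k : ℕ) : ℝ := (k : ℝ) ^ k / ((k : ℝ) + 1) ^ (k + 1)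

lemma oscillationThreshold_nonneg (k : ℕ) : 0 ≤ oscillationThreshold k := by
  unfold oscillationThreshold; positivity

lemma sub_one_le_oscillationThreshold_mul_pow {k : ℕ} (hk : 1 ≤ k) {m : ℝ} (hm : 0 ≤ m) :
    m - 1 ≤ oscillationThreshold k * m ^ (k + 1) := by
  have hk0 : (0 : ℝ) < k := by exact_mod_cast hk
  have hx : -1 ≤ k * m / (k + 1) := by linarith [show 0 ≤ k * m / (k + 1) by positivity]
  -- Bernoulli's inequality at `k m / (k + 1)`
  have hB := one_add_mul_sub_le_pow hx (k + 1)
  have key : k * (m - 1) ≤ k * (oscillationThreshold k * m ^ (k + 1)) := by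
    calc (k : ℝ) * (m - 1) = 1 + ((k + 1 : ℕ) : ℝ) * (k * m / (k + 1) - 1) := by
          push_cast; field_simp; ring
      _ ≤ (k * m / (k + 1)) ^ (k + 1) := hB
      _ = k * (oscillationThreshold k * m ^ (k + 1)) := by
          unfold oscillationThreshold; rw [div_pow, mul_pow, pow_succ]; ring
  exact le_of_mul_le_mul_left key hk0

lemma Real.eventually_lt_of_nonneg_lt_liminf {ι : Type*} {f : Filter ι} {u : ι → ℝ} {b : ℝ}
    (hb : 0 ≤ b) (h : b < liminf u f) : ∀ᶠ i in f, b < u i := by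
  by_cases hu : f.IsBoundedUnder (· ≥ ·) u
  · exact eventually_lt_of_lt_liminf h hu
  · -- a liminf of a function unbounded below is the junk value `0`
    rw [Real.liminf_of_not_isBoundedUnder hu] at h
    exact absurd h hb.not_gt

lemma Int.eventually_atTop_add {P : ℤ → Prop} (h : ∀ᶠ n in atTop, P n) (j : ℤ) :
    ∀ᶠ n in atTop, P (n + j) :=
  (tendsto_atTop_add_const_right atTop j tendsto_id).eventually h

lemma Int.eventually_atTop_sub {P : ℤ → Prop} (h : ∀ᶠ n in atTop, P n) (j : ℤ) :
    ∀ᶠ n in atTop, P (n - j) := by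
  simpa only [sub_eq_add_neg] using Int.eventually_atTop_add h (-j)

section DelayEquation

variable {k : ℕ} {Q y : ℤ → ℝ} {r m : ℝ}

lemma eventually_pow_mul_le (hm : 0 ≤ m) (h : ∀ᶠ n in atTop, m * y (n + 1) ≤ y n) (i : ℕ) :
    ∀ᶠ n in atTop, m ^ i * y (n + i) ≤ y n := by
  induction i with
  | zero => simp
  | succ i ih =>
    filter_upwards [ih, Int.eventually_atTop_add h i] with n hi hstep
    calc m ^ (i + 1) * y (n + (i + 1 : ℕ)) = m ^ i * (m * y (n + i + 1)) := by
          push_cast; ring_nf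
      _ ≤ m ^ i * y (n + i) := mul_le_mul_of_nonneg_left hstep (pow_nonneg hm i)
      _ ≤ y n := hi

lemma eventually_lt_one_sub_mul_pow (hr : 0 ≤ r) (hQ : ∀ᶠ n in atTop, r < Q n)
    (hy : ∀ᶠ n in atTop, y (n + 1) = y n - Q n * y (n - k)) (hpos : ∀ᶠ n in atTop, 0 < y n)
    (hm : 0 ≤ m) (h : ∀ᶠ n in atTop, m * y (n + 1) ≤ y n) :
    ∀ᶠ n in atTop, y (n + 1) < (1 - r * m ^ k) * y n := by
  have hdelay : ∀ᶠ n in atTop, m ^ k * y n ≤ y (n - k) := by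
    filter_upwards [Int.eventually_atTop_sub (eventually_pow_mul_le hm h k) k] with n hn
    rwa [sub_add_cancel] at hn
  filter_upwards [hQ, hy, hdelay, Int.eventually_atTop_sub hpos k] with n hQn hyn hdn hpn
  rw [hyn]
  nlinarith [mul_lt_mul_of_pos_right hQn hpn, mul_le_mul_of_nonneg_left hdn hr]

lemma mul_pow_lt_one_of_eventually (hr : 0 ≤ r) (hQ : ∀ᶠ n in atTop, r < Q n)
    (hy : ∀ᶠ n in atTop, y (n + 1) = y n - Q n * y (n - k)) (hpos : ∀ᶠ n in atTop, 0 < y n)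
    (hm : 0 ≤ m) (h : ∀ᶠ n in atTop, m * y (n + 1) ≤ y n) : r * m ^ k < 1 := by
  obtain ⟨n, hlt, hn, hn1⟩ := (eventually_lt_one_sub_mul_pow hr hQ hy hpos hm h |>.and
    (hpos.and (Int.eventually_atTop_add hpos 1))).exists
  nlinarith

lemma eventually_add_mul_le (hk : 1 ≤ k) (hr : oscillationThreshold k < r)
    (hQ : ∀ᶠ n in atTop, r < Q n) (hy : ∀ᶠ n in atTop, y (n + 1) = y n - Q n * y (n - k))
    (hpos : ∀ᶠ n in atTop, 0 < y n) (hm : 1 ≤ m) (h : ∀ᶠ n in atTop, m * y (n + 1) ≤ y n) :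
    ∀ᶠ n in atTop, (m + (r - oscillationThreshold k)) * y (n + 1) ≤ y n := by
  set c := oscillationThreshold k
  have hr0 : 0 ≤ r := (oscillationThreshold_nonneg k).trans hr.le
  have hc := sub_one_le_oscillationThreshold_mul_pow hk (zero_le_one.trans hm)
  have hmk : 1 ≤ m ^ k := one_le_pow₀ hm
  have hfactor : (m + (r - c)) * (1 - r * m ^ k) ≤ 1 := by
    rw [pow_succ] at hc
    nlinarith [mul_le_mul_of_nonneg_left hmk (sub_nonneg.2 hr.le),
      mul_nonneg (sub_nonneg.2 hr.le) hr0]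
  filter_upwards [eventually_lt_one_sub_mul_pow hr0 hQ hy hpos (by linarith) h,
    hpos, Int.eventually_atTop_add hpos 1] with n hlt hn hn1
  calc (m + (r - c)) * y (n + 1) ≤ (m + (r - c)) * ((1 - r * m ^ k) * y n) :=
        mul_le_mul_of_nonneg_left hlt.le (by linarith)
    _ = ((m + (r - c)) * (1 - r * m ^ k)) * y n := by ring
    _ ≤ y n := by nlinarith

theorem not_eventually_pos_of_delay_eq (hk : 1 ≤ k)
    (hQ : oscillationThreshold k < liminf Q atTop)
    (hy : ∀ᶠ n in atTop, y (n + 1) = y n - Q n * y (n - k)) : ¬ ∀ᶠ n in atTop, 0 < y n := by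
  intro hpos
  obtain ⟨r, hcr, hrQ⟩ := exists_between hQ
  set δ := r - oscillationThreshold k
  have hδ : 0 < δ := sub_pos.2 hcr
  have hr : 0 < r := (oscillationThreshold_nonneg k).trans_lt hcr
  have hQr := Real.eventually_lt_of_nonneg_lt_liminf hr.le hrQ
  have hm : ∀ j : ℕ, 1 ≤ 1 + j * δ := fun j => le_add_of_nonneg_right (by positivity)
  have hratio : ∀ j : ℕ, ∀ᶠ n in atTop, (1 + j * δ) * y (n + 1) ≤ y n := by
    intro j
    induction j with
    | zero =>
      filter_upwards [hy, hQr, Int.eventually_atTop_sub hpos k] with n hyn hQn hpn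
      simp only [CharP.cast_eq_zero, zero_mul, add_zero, one_mul]
      nlinarith [mul_pos (hr.trans hQn) hpn]
    | succ j ih =>
      filter_upwards [eventually_add_mul_le hk hcr hQr hy hpos (hm j) ih] with n hn
      push_cast
      linarith
  obtain ⟨j, hj⟩ := exists_nat_gt (r * δ)⁻¹
  have hlt := mul_pow_lt_one_of_eventually hr.le hQr hy hpos (by linarith [hm j]) (hratio j)
  have hrj : 1 < r * (j * δ) := by
    rw [inv_lt_iff_one_lt_mul₀ (mul_pos hr hδ)] at hj; linarith
  nlinarith [le_self_pow₀ (hm j) (by omega : k ≠ 0)]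

end DelayEquation

lemma prod_Ico_inv_add_one_mul {G₀ : Type*} [CommGroupWithZero G₀] {a : ℤ → G₀} {n0 n : ℤ}
    (hn : n0 ≤ n) (ha : a n ≠ 0) :
    (∏ j ∈ Ico n0 (n + 1), (a j)⁻¹) * a n = ∏ j ∈ Ico n0 n, (a j)⁻¹ := by
  rw [← insert_Ico_right_eq_Ico_add_one hn, prod_insert (by simp), mul_comm, ← mul_assoc,
    mul_inv_cancel₀ ha, one_mul]

lemma delay_eq_of_mul_prod_inv {K : Type*} [Field K] {k : ℕ} {n0 : ℤ} {a b α z : ℤ → K}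
    (ha : ∀ n, a n ≠ 0) (hα : ∀ n, α n = ∏ j ∈ Ico n0 n, (a j)⁻¹)
    (heq : ∀ n : ℤ, z (n + 1) = a n * z n + b n * z (n - k)) {n : ℤ} (hn : n0 ≤ n) :
    α (n + 1) * z (n + 1) =
      α n * z n - -(α (n + 1) * b n / α (n - k)) * (α (n - k) * z (n - k)) := by
  have hα0 : α (n - k) ≠ 0 := by
    rw [hα]; exact prod_ne_zero_iff.2 fun j _ => inv_ne_zero (ha j)
  have hrec : α (n + 1) * a n = α n := by rw [hα, hα]; exact prod_Ico_inv_add_one_mul hn (ha n)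
  rw [heq, ← hrec]
  field_simp
  ring

lemma eventually_pos_or_eventually_neg {R : Type*} [CommRing R] [LinearOrder R]
    [IsStrictOrderedRing R] {z : ℤ → R} {M : ℤ} (h : ∀ n, M ≤ n → 0 < z n * z (n + 1)) :
    (∀ᶠ n in atTop, 0 < z n) ∨ ∀ᶠ n in atTop, z n < 0 := by
  have hsame : ∀ n, M ≤ n → 0 < z M * z n := by
    refine Int.leInduction (mul_self_pos.2 (left_ne_zero_of_mul (h M le_rfl).ne')) ?_
    intro n hn ih
    have key : 0 < z M * z (n + 1) * (z n * z n) := (mul_pos ih (h n hn)).trans_eq (by ring)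
    exact pos_of_mul_pos_left key (mul_self_nonneg _)
  rcases (pos_and_pos_or_neg_and_neg_of_mul_pos (hsame M le_rfl)).imp And.left And.left with
    hM | hM
  · exact .inl <| (eventually_ge_atTop M).mono fun n hn => pos_of_mul_pos_right (hsame n hn) hM.le
  · exact .inr <| (eventually_ge_atTop M).mono fun n hn => neg_of_mul_pos_right (hsame n hn) hM.le

theorem stmt_11_general (n0 : ℤ) (k : ℕ) (hk : 1 ≤ k) (a b : ℤ → ℝ)
    (ha : ∀ n, 0 < a n)
    (α Qs : ℤ → ℝ)
    (hα : ∀ n, α n = ∏ j ∈ Finset.Ico n0 n, (a j)⁻¹)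
    (hQs : ∀ n, Qs n = -(α (n + 1) * b n / α (n - k)))
    (hlim : (k : ℝ) ^ k / ((k : ℝ) + 1) ^ (k + 1) < Filter.liminf Qs Filter.atTop)
    (z : ℤ → ℝ)
    (heq : ∀ n : ℤ, z (n + 1) = a n * z n + b n * z (n - k)) :
    ∀ M : ℤ, ∃ n, M ≤ n ∧ z n * z (n + 1) ≤ 0 := by
  by_contra! hnosc
  obtain ⟨M, hM⟩ := hnosc
  have hαpos : ∀ n, 0 < α n := fun n => hα n ▸ prod_pos fun j _ => inv_pos.2 (ha j)
  have hy : ∀ᶠ n in atTop,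
      α (n + 1) * z (n + 1) = α n * z n - Qs n * (α (n - k) * z (n - k)) :=
    (eventually_ge_atTop n0).mono fun n hn =>
      hQs n ▸ delay_eq_of_mul_prod_inv (fun n => (ha n).ne') hα heq hn
  rcases eventually_pos_or_eventually_neg hM with hz | hz
  · exact not_eventually_pos_of_delay_eq hk hlim hy (hz.mono fun n hn => mul_pos (hαpos n) hn)
  · refine not_eventually_pos_of_delay_eq (y := fun n => -(α n * z n)) hk hlim
      (hy.mono fun n hn => by simp only [hn]; ring) (hz.mono fun n hn => ?_)
    simpa using mul_neg_of_pos_of_neg (hαpos n) hn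

/-- Erbe–Zhang-type criterion for `z_{n+1} = aₙ zₙ + bₙ z_{n-k}` with `aₙ > 0`, `bₙ < 0`. -/
theorem stmt_11 (n0 : ℤ) (k : ℕ) (hk : 1 ≤ k) (a b : ℤ → ℝ)
    (ha : ∀ n, 0 < a n) (hb : ∀ n, b n < 0)
    (α Qs : ℤ → ℝ)
    (hα : ∀ n, α n = ∏ j ∈ Finset.Ico n0 n, (a j)⁻¹)
    (hQs : ∀ n, Qs n = -(α (n + 1) * b n / α (n - k)))
    (hQpos : ∀ n, 0 < Qs n)
    (hlim : (k : ℝ) ^ k / ((k : ℝ) + 1) ^ (k + 1) < Filter.liminf Qs Filter.atTop)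
    (z : ℤ → ℝ)
    (heq : ∀ n : ℤ, z (n + 1) = a n * z n + b n * z (n - k))
    (hne : ∃ n, z n ≠ 0) :
    ∀ M : ℤ, ∃ n, M ≤ n ∧ z n * z (n + 1) ≤ 0 :=
  stmt_11_general n0 k hk a b ha α Qs hα hQs hlim z heq
end

section
/- Let $(a_n), (b_n)$ be real sequences with $a_n > 0$ and $b_n > 0$, $\ell \geq 2$, $\alpha_n = \prod_{j=n_0}^{n-1} a_j^{-1}$, and $Q_n = \alpha_{n+1} b_n / \alpha_{n+\ell}$. If $\liminf_{n\to\infty} \sum_{s=n+1}^{n+\ell-1} Q_s > \left(\frac{\ell-1}{\ell}\right)^{\ell}$ or $\limsup_{n\to\infty} \sum_{s=n}^{n+\ell-1} Q_s > 1$, then every solution of the advanced equation $z_{n+1} = a_n z_n + b_n z_{n+\ell}$ is oscillatory. -/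
/-!
Since `αₙ > 0`, a solution `z` with no sign change after `M` yields `yₙ = αₙ z_M zₙ`, a solution of
`y_{n+1} - yₙ = Qₙ y_{n+ℓ}` that is eventually positive, hence eventually nondecreasing. Summing the
equation over `[n, n + ℓ)` gives `yₙ + (∑_{s=n}^{n+ℓ-1} Qₛ) y_{n+ℓ} ≤ y_{n+ℓ}`, so these window sums
stay below `1`, which rules out the limsup condition.

For the liminf condition, let `∑_{s=n+1}^{n+ℓ-1} Qₛ ≥ c > ((ℓ-1)/ℓ)^ℓ` eventually. Cutting such a
window where both pieces carry mass `c/2` shows that `wₙ = y_{n+ℓ} / y_{n+1}` is frequently at most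
`(2/c)²`, so `r = liminf wₙ ≥ 1` is finite. For `ρ < r` and large `n`, the equation gives
`yₛ ≤ y_{s+1} (1 - ρ Qₛ)` along the window; multiplying and applying AM-GM yields
`r e^{ℓ-1} ≥ 1` with `e = 1 - ρc/(ℓ-1)`, whereas maximizing `x ↦ x (1 - x/(ℓ-1))^{ℓ-1}` gives
`ρ c e^{ℓ-1} ≤ ((ℓ-1)/ℓ)^ℓ`. Hence `ρ ≤ r ((ℓ-1)/ℓ)^ℓ / c`, which fails for `ρ` close to `r`.
-/

open Finset Filter

theorem prod_le_mean_pow {ι : Type*} (s : Finset ι) (f : ι → ℝ) (hf : ∀ i ∈ s, 0 ≤ f i) :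
    ∏ i ∈ s, f i ≤ ((∑ i ∈ s, f i) / #s) ^ #s := by
  rcases s.eq_empty_or_nonempty with rfl | hs
  · simp
  have amgm := Real.geom_mean_le_arith_mean s (fun _ => 1) f (fun _ _ => zero_le_one)
    (by simpa using hs.card_pos) hf
  simp only [Real.rpow_one, one_mul, sum_const, nsmul_eq_mul, mul_one] at amgm
  calc ∏ i ∈ s, f i = ((∏ i ∈ s, f i) ^ ((#s : ℕ) : ℝ)⁻¹) ^ #s :=
        (Real.rpow_inv_natCast_pow (prod_nonneg hf) hs.card_pos.ne').symm
    _ ≤ ((∑ i ∈ s, f i) / #s) ^ #s :=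
        pow_le_pow_left₀ (Real.rpow_nonneg (prod_nonneg hf) _) amgm _

/-- AM-GM applied to `k` copies of `u` and one copy of `k (1 - u)`. -/
theorem mul_pow_mul_one_sub_le (k : ℕ) {u : ℝ} (hu : 0 ≤ u) :
    k * u ^ k * (1 - u) ≤ ((k : ℝ) / (k + 1)) ^ (k + 1) := by
  rcases lt_or_ge 1 u with hu1 | hu1
  · have : (k : ℝ) * u ^ k * (1 - u) ≤ 0 :=
      mul_nonpos_of_nonneg_of_nonpos (by positivity) (by linarith)
    exact this.trans (by positivity)
  let f : ℕ → ℝ := fun i => if i < k then u else k * (1 - u)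
  have hf : ∀ i ∈ range (k + 1), 0 ≤ f i := fun i _ => by
    unfold f; split_ifs <;> [exact hu; exact mul_nonneg k.cast_nonneg (by linarith)]
  have hprod : ∏ i ∈ range (k + 1), f i = k * u ^ k * (1 - u) := by
    rw [prod_range_succ, prod_congr rfl fun i hi => if_pos (mem_range.1 hi), prod_const,
      card_range]
    simp only [f, lt_irrefl, if_false]
    ring
  have hsum : ∑ i ∈ range (k + 1), f i = k := by
    rw [sum_range_succ, sum_congr rfl fun i hi => if_pos (mem_range.1 hi), sum_const,
      card_range]
    simp only [f, lt_irrefl, if_false, nsmul_eq_mul]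
    ring
  simpa [hprod, hsum] using prod_le_mean_pow (range (k + 1)) f hf

theorem mul_one_sub_div_pow_le {ℓ : ℕ} (hℓ : 1 < ℓ) {x : ℝ} (hx : 0 ≤ 1 - x / (ℓ - 1)) :
    x * (1 - x / (ℓ - 1)) ^ (ℓ - 1) ≤ ((ℓ - 1) / ℓ) ^ ℓ := by
  obtain ⟨k, rfl⟩ : ∃ k, ℓ = k + 1 := ⟨ℓ - 1, by omega⟩
  have hk : (k : ℝ) ≠ 0 := by exact_mod_cast (by omega : k ≠ 0)
  push_cast at hx ⊢
  rw [add_sub_cancel_right] at hx ⊢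
  calc x * (1 - x / k) ^ k = k * (1 - x / k) ^ k * (1 - (1 - x / k)) := by
        field_simp; ring
    _ ≤ _ := mul_pow_mul_one_sub_le k hx

theorem exists_mem_Ico_half_le_sum (f : ℤ → ℝ) {a b : ℤ} {c : ℝ} (hc : 0 < c)
    (hsum : c ≤ ∑ s ∈ Ico a b, f s) :
    ∃ m ∈ Ico a b, c / 2 ≤ ∑ s ∈ Ico a (m + 1), f s ∧ c / 2 ≤ ∑ s ∈ Ico m b, f s := by
  have hab : a < b := by
    by_contra! h
    rw [Ico_eq_empty_of_le h, sum_empty] at hsum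
    linarith
  let T := (Ico a b).filter fun m => c / 2 ≤ ∑ s ∈ Ico a (m + 1), f s
  have hT : T.Nonempty := ⟨b - 1, mem_filter.2 ⟨mem_Ico.2 ⟨by omega, by omega⟩, by
    rw [sub_add_cancel]; linarith⟩⟩
  obtain ⟨hm, hm_half⟩ := mem_filter.1 (T.min'_mem hT)
  set m := T.min' hT
  have hprefix : ∑ s ∈ Ico a m, f s < c / 2 := by
    rcases (mem_Ico.1 hm).1.eq_or_lt with hma | hma
    · rw [← hma, Ico_self, sum_empty]; linarith
    · by_contra! h
      have : m - 1 ∈ T := mem_filter.2 ⟨mem_Ico.2 ⟨by omega, by grind⟩, by rwa [sub_add_cancel]⟩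
      linarith [T.min'_le _ this]
  have hsplit : ∑ s ∈ Ico a m, f s + ∑ s ∈ Ico m b, f s = ∑ s ∈ Ico a b, f s := by
    rw [← sum_union (Ico_disjoint_Ico_consecutive a m b),
      Ico_union_Ico_eq_Ico (mem_Ico.1 hm).1 (mem_Ico.1 hm).2.le]
  exact ⟨m, hm, hm_half, by linarith⟩

theorem le_mul_prod_Ico_of_le_mul {y u : ℤ → ℝ} {A B : ℤ} (hAB : A ≤ B)
    (hu : ∀ s ∈ Ico A B, 0 ≤ u s) (hstep : ∀ s ∈ Ico A B, y s ≤ y (s + 1) * u s) :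
    y A ≤ y B * ∏ s ∈ Ico A B, u s := by
  induction B, hAB using Int.leInduction with
  | base => simp
  | succ B hAB ih =>
    have hsub : Ico A B ⊆ Ico A (B + 1) := Ico_subset_Ico_right (by omega)
    have hB : B ∈ Ico A (B + 1) := mem_Ico.2 ⟨hAB, by omega⟩
    rw [Ico_add_one_right_eq_Icc, ← Ico_insert_right hAB, prod_insert (by simp)]
    calc y A ≤ y B * ∏ s ∈ Ico A B, u s :=
          ih (fun s hs => hu s (hsub hs)) (fun s hs => hstep s (hsub hs))
      _ ≤ y (B + 1) * u B * ∏ s ∈ Ico A B, u s :=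
          mul_le_mul_of_nonneg_right (hstep B hB) (prod_nonneg fun s hs => hu s (hsub hs))
      _ = y (B + 1) * (u B * ∏ s ∈ Ico A B, u s) := mul_assoc _ _ _

structure IsPosSolutionFrom (Q y : ℤ → ℝ) (ℓ : ℕ) (N : ℤ) : Prop where
  pos : ∀ n, N ≤ n → 0 < y n
  succ_eq : ∀ n, N ≤ n → y (n + 1) = y n + Q n * y (n + ℓ)

namespace IsPosSolutionFrom

variable {Q y : ℤ → ℝ} {ℓ : ℕ} {N : ℤ}

theorem eq_add_sum (h : IsPosSolutionFrom Q y ℓ N) {A B : ℤ} (hA : N ≤ A) (hAB : A ≤ B) :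
    y B = y A + ∑ s ∈ Ico A B, Q s * y (s + ℓ) := by
  induction B, hAB using Int.leInduction with
  | base => simp
  | succ B hAB ih =>
    rw [Ico_add_one_right_eq_Icc, ← Ico_insert_right hAB, sum_insert (by simp),
      h.succ_eq B (hA.trans hAB), ih]
    ring

theorem monotoneOn (h : IsPosSolutionFrom Q y ℓ N) (hQ : ∀ n, 0 ≤ Q n) :
    MonotoneOn y (Set.Ici N) := by
  intro A (hA : N ≤ A) B _ hAB
  rw [h.eq_add_sum hA hAB, le_add_iff_nonneg_right]
  exact sum_nonneg fun s hs =>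
    mul_nonneg (hQ s) (h.pos _ (by have := (mem_Ico.1 hs).1; omega)).le

theorem add_sum_mul_le (h : IsPosSolutionFrom Q y ℓ N) (hQ : ∀ n, 0 ≤ Q n) {A B : ℤ}
    (hA : N ≤ A) (hAB : A ≤ B) : y A + (∑ s ∈ Ico A B, Q s) * y (A + ℓ) ≤ y B := by
  rw [h.eq_add_sum hA hAB, sum_mul, add_le_add_iff_left]
  refine sum_le_sum fun s hs => mul_le_mul_of_nonneg_left ?_ (hQ s)
  have := (mem_Ico.1 hs).1
  exact h.monotoneOn hQ (Set.mem_Ici.2 (by omega)) (Set.mem_Ici.2 (by omega)) (by omega)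

theorem limsup_sum_le_one (h : IsPosSolutionFrom Q y ℓ N) (hQ : ∀ n, 0 ≤ Q n) :
    limsup (fun n : ℤ => ∑ s ∈ Ico n (n + ℓ), Q s) atTop ≤ 1 := by
  refine limsup_le_of_le (isCoboundedUnder_le_of_le atTop fun n => sum_nonneg fun s _ => hQ s) ?_
  filter_upwards [eventually_ge_atTop N] with n hn
  have hle := h.add_sum_mul_le hQ hn (by omega : n ≤ n + ℓ)
  have := h.pos n hn
  have := h.pos (n + ℓ) (by omega)
  nlinarith

theorem frequently_div_le (h : IsPosSolutionFrom Q y ℓ N) (hQ : ∀ n, 0 ≤ Q n) {c : ℝ}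
    (hc : 0 < c) (hS : ∀ᶠ n : ℤ in atTop, c ≤ ∑ s ∈ Ico (n + 1) (n + ℓ), Q s) :
    ∃ᶠ m in atTop, y (m + ℓ) / y (m + 1) ≤ (2 / c) ^ 2 := by
  rw [frequently_atTop]
  intro p
  obtain ⟨n, hSn, hn⟩ := (hS.and (eventually_ge_atTop (max p N))).exists
  obtain ⟨m, hm, hhead, htail⟩ := exists_mem_Ico_half_le_sum Q hc hSn
  obtain ⟨hnm, hmn⟩ := mem_Ico.1 hm
  have hpN : p ≤ n ∧ N ≤ n := max_le_iff.1 hn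
  refine ⟨m, by omega, ?_⟩
  have hy : ∀ k, n ≤ k → 0 < y k := fun k hk => h.pos k (by omega)
  have hhead' : c / 2 * y (n + 1 + ℓ) ≤ y (m + 1) := by
    have := h.add_sum_mul_le hQ (A := n + 1) (B := m + 1) (by omega) (by omega)
    nlinarith [mul_le_mul_of_nonneg_right hhead (hy (n + 1 + ℓ) (by omega)).le,
      hy (n + 1) (by omega)]
  have htail' : c / 2 * y (m + ℓ) ≤ y (n + ℓ) := by
    have := h.add_sum_mul_le hQ (A := m) (B := n + ℓ) (by omega) (by omega)
    nlinarith [mul_le_mul_of_nonneg_right htail (hy (m + ℓ) (by omega)).le, hy m (by omega)]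
  have hshift : y (n + ℓ) ≤ y (n + 1 + ℓ) :=
    h.monotoneOn hQ (Set.mem_Ici.2 (by omega)) (Set.mem_Ici.2 (by omega)) (by omega)
  rw [div_le_iff₀ (hy (m + 1) (by omega))]
  have hchain : c / 2 * (c / 2 * y (m + ℓ)) ≤ y (m + 1) :=
    (mul_le_mul_of_nonneg_left (htail'.trans hshift) (by positivity)).trans hhead'
  calc y (m + ℓ) = (2 / c) ^ 2 * (c / 2 * (c / 2 * y (m + ℓ))) := by field_simp
    _ ≤ (2 / c) ^ 2 * y (m + 1) := by gcongr

theorem le_mul_one_sub_pow (h : IsPosSolutionFrom Q y ℓ N) (hQ : ∀ n, 0 ≤ Q n)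
    (hℓ : 2 ≤ ℓ) {n : ℤ} (hn : N ≤ n) {ρ c : ℝ} (hρ : 0 ≤ ρ)
    (hc : c ≤ ∑ s ∈ Ico (n + 1) (n + ℓ), Q s)
    (hratio : ∀ s ∈ Ico (n + 1) (n + ℓ), ρ * y (s + 1) ≤ y (s + ℓ)) :
    0 < 1 - ρ * c / (ℓ - 1) ∧ y (n + 1) ≤ y (n + ℓ) * (1 - ρ * c / (ℓ - 1)) ^ (ℓ - 1) := by
  set W := Ico (n + 1) (n + ℓ)
  have hcard : #W = ℓ - 1 := by simp only [W, Int.card_Ico]; omega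
  have hcardR : (#W : ℝ) = ℓ - 1 := by rw [hcard, Nat.cast_sub (by omega), Nat.cast_one]
  have hstep : ∀ s ∈ W, 0 < 1 - ρ * Q s ∧ y s ≤ y (s + 1) * (1 - ρ * Q s) := by
    intro s hs
    have hsn := (mem_Ico.1 hs).1
    have hle : y s ≤ y (s + 1) * (1 - ρ * Q s) := by
      nlinarith [h.succ_eq s (by omega), mul_le_mul_of_nonneg_left (hratio s hs) (hQ s)]
    exact ⟨pos_of_mul_pos_right ((h.pos s (by omega)).trans_le hle) (h.pos _ (by omega)).le, hle⟩
  have hprod := le_mul_prod_Ico_of_le_mul (by omega) (fun s hs => (hstep s hs).1.le)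
    (fun s hs => (hstep s hs).2)
  have hk : (0 : ℝ) < ℓ - 1 := by
    rw [sub_pos, Nat.one_lt_cast]; omega
  have hmean : (∑ s ∈ W, (1 - ρ * Q s)) / #W ≤ 1 - ρ * c / (ℓ - 1) := by
    rw [hcardR, div_le_iff₀ hk, sub_mul, one_mul, div_mul_cancel₀ _ hk.ne', sum_sub_distrib,
      ← mul_sum, sum_const, nsmul_one, hcardR]
    gcongr
  have hmean_pos : 0 < (∑ s ∈ W, (1 - ρ * Q s)) / #W :=
    div_pos (sum_pos (fun s hs => (hstep s hs).1) (nonempty_Ico.2 (by omega))) (hcardR ▸ hk)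
  refine ⟨hmean_pos.trans_le hmean, ?_⟩
  calc y (n + 1) ≤ y (n + ℓ) * ∏ s ∈ W, (1 - ρ * Q s) := hprod
    _ ≤ y (n + ℓ) * ((∑ s ∈ W, (1 - ρ * Q s)) / #W) ^ #W := by
        gcongr
        · exact (h.pos _ (by omega)).le
        · exact prod_le_mean_pow W _ fun s hs => (hstep s hs).1.le
    _ ≤ y (n + ℓ) * (1 - ρ * c / (ℓ - 1)) ^ #W := by
        gcongr
        exact (h.pos _ (by omega)).le
    _ = y (n + ℓ) * (1 - ρ * c / (ℓ - 1)) ^ (ℓ - 1) := by rw [hcard]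

theorem liminf_sum_le (h : IsPosSolutionFrom Q y ℓ N) (hQ : ∀ n, 0 ≤ Q n) (hℓ : 2 ≤ ℓ) :
    liminf (fun n : ℤ => ∑ s ∈ Ico (n + 1) (n + ℓ), Q s) atTop ≤ ((ℓ - 1) / ℓ) ^ ℓ := by
  set M₀ : ℝ := ((ℓ - 1) / ℓ) ^ ℓ
  have hℓR : (1 : ℝ) ≤ ℓ := by exact_mod_cast (by omega : 1 ≤ ℓ)
  have hM₀ : 0 ≤ M₀ := pow_nonneg (div_nonneg (by linarith) (by linarith)) ℓ
  by_contra! hlt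
  obtain ⟨c, hM₀c, hc⟩ := exists_between hlt
  have hc0 : 0 < c := hM₀.trans_lt hM₀c
  have hS : ∀ᶠ n : ℤ in atTop, c ≤ ∑ s ∈ Ico (n + 1) (n + ℓ), Q s :=
    (eventually_lt_of_lt_liminf hc (isBoundedUnder_of ⟨0, fun n => sum_nonneg fun s _ => hQ s⟩)
      ).mono fun _ => le_of_lt
  set w : ℤ → ℝ := fun n => y (n + ℓ) / y (n + 1)
  have hw1 : ∀ᶠ n in atTop, 1 ≤ w n := by
    filter_upwards [eventually_ge_atTop N] with n hn
    rw [one_le_div (h.pos _ (by omega))]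
    exact h.monotoneOn hQ (Set.mem_Ici.2 (by omega)) (Set.mem_Ici.2 (by omega)) (by omega)
  have hcobdd : IsCoboundedUnder (· ≥ ·) atTop w :=
    IsCoboundedUnder.of_frequently_le (h.frequently_div_le hQ hc0 hS)
  set r := liminf w atTop
  have hr1 : 1 ≤ r := le_liminf_of_le hcobdd hw1
  obtain ⟨ρ, hρM₀, hρr⟩ : ∃ ρ, r * (M₀ / c) < ρ ∧ ρ < r :=
    exists_between (mul_lt_of_lt_one_right (by linarith) ((div_lt_one hc0).2 hM₀c))
  have hρ0 : 0 ≤ ρ := le_trans (by positivity) hρM₀.le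
  obtain ⟨N₁, hN₁⟩ := eventually_atTop.1 (eventually_lt_of_lt_liminf hρr ⟨1, hw1⟩)
  set e := 1 - ρ * c / (ℓ - 1)
  have hbound : ∀ᶠ n in atTop, 0 < e ∧ y (n + 1) ≤ y (n + ℓ) * e ^ (ℓ - 1) := by
    filter_upwards [eventually_ge_atTop (max N N₁), hS] with n hn hSn
    refine h.le_mul_one_sub_pow hQ hℓ (le_of_max_le_left hn) hρ0 hSn fun s hs => ?_
    have := (mem_Ico.1 hs).1
    exact ((lt_div_iff₀ (h.pos _ (by omega))).1 (hN₁ s (by omega))).le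
  obtain ⟨n, he, -⟩ := hbound.exists
  have hre : 1 ≤ r * e ^ (ℓ - 1) := by
    have : 1 / e ^ (ℓ - 1) ≤ r := le_liminf_of_le hcobdd <| by
      filter_upwards [hbound, eventually_ge_atTop N] with n hn hnN
      rw [div_le_div_iff₀ (pow_pos he _) (h.pos _ (by omega))]
      linarith [hn.2]
    rwa [div_le_iff₀ (pow_pos he _)] at this
  have hbern : ρ * c * e ^ (ℓ - 1) ≤ M₀ := mul_one_sub_div_pow_le (by omega) he.le
  have hρc : r * M₀ < ρ * c := by rwa [mul_div_assoc', div_lt_iff₀ hc0] at hρM₀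
  nlinarith [mul_le_mul_of_nonneg_left hre (mul_nonneg hρ0 hc0.le),
    mul_le_mul_of_nonneg_left hbern (by linarith : 0 ≤ r)]

end IsPosSolutionFrom

theorem mul_pos_of_forall_mul_succ_pos {z : ℤ → ℝ} {M : ℤ}
    (hz : ∀ n, M ≤ n → 0 < z n * z (n + 1)) : ∀ n, M ≤ n → 0 < z M * z n := by
  intro n hn
  induction n, hn using Int.leInduction with
  | base => exact mul_self_pos.2 (left_ne_zero_of_mul (hz M le_rfl).ne')
  | succ n hMn ih =>
    refine pos_of_mul_pos_right (a := z n ^ 2) ?_ (sq_nonneg _)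
    linear_combination (mul_pos ih (hz n hMn))

theorem stmt_13_general (n0 : ℤ) (ℓ : ℕ) (hℓ : 2 ≤ ℓ) (a b : ℤ → ℝ)
    (ha : ∀ n, 0 < a n) (hb : ∀ n, 0 < b n)
    (α Q : ℤ → ℝ)
    (hα : ∀ n, α n = ∏ j ∈ Finset.Ico n0 n, (a j)⁻¹)
    (hQ : ∀ n, Q n = α (n + 1) * b n / α (n + ℓ))
    (hlim :
      (((ℓ : ℝ) - 1) / (ℓ : ℝ)) ^ ℓ <
        Filter.liminf (fun n : ℤ => ∑ s ∈ Finset.Ico (n + 1) (n + ℓ), Q s) Filter.atTop ∨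
      1 < Filter.limsup (fun n : ℤ => ∑ s ∈ Finset.Ico n (n + ℓ), Q s) Filter.atTop)
    (z : ℤ → ℝ)
    (heq : ∀ n : ℤ, z (n + 1) = a n * z n + b n * z (n + ℓ)) :
    ∀ M : ℤ, ∃ n, M ≤ n ∧ z n * z (n + 1) ≤ 0 := by
  intro M
  by_contra! hz
  have hα_pos : ∀ n, 0 < α n := fun n => hα n ▸ prod_pos fun j _ => inv_pos.2 (ha j)
  have hα_succ : ∀ n, n0 ≤ n → α (n + 1) * a n = α n := fun n hn => by
    rw [hα, hα, Ico_add_one_right_eq_Icc, ← Ico_insert_right hn, prod_insert (by simp),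
      mul_comm, mul_inv_cancel_left₀ (ha n).ne']
  have hQ_nonneg : ∀ n, 0 ≤ Q n := fun n =>
    hQ n ▸ div_nonneg (mul_pos (hα_pos _) (hb n)).le (hα_pos _).le
  have hsol : IsPosSolutionFrom Q (fun n => α n * (z M * z n)) ℓ (max M n0) := by
    refine ⟨fun n hn => mul_pos (hα_pos n)
      (mul_pos_of_forall_mul_succ_pos hz n (le_of_max_le_left hn)), fun n hn => ?_⟩
    have hQα : Q n * α (n + ℓ) = α (n + 1) * b n := by
      rw [hQ, div_mul_cancel₀ _ (hα_pos _).ne']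
    rw [heq n]
    linear_combination (z M * z n) * hα_succ n (le_of_max_le_right hn) - (z M * z (n + ℓ)) * hQα
  rcases hlim with h | h
  · exact (hsol.liminf_sum_le hQ_nonneg hℓ).not_gt h
  · exact (hsol.limsup_sum_le_one hQ_nonneg).not_gt h

/-- Győri–Ladas-type criterion for the advanced equation `z_{n+1} = aₙ zₙ + bₙ z_{n+ℓ}`. -/
theorem stmt_13 (n0 : ℤ) (ℓ : ℕ) (hℓ : 2 ≤ ℓ) (a b : ℤ → ℝ)
    (ha : ∀ n, 0 < a n) (hb : ∀ n, 0 < b n)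
    (α Q : ℤ → ℝ)
    (hα : ∀ n, α n = ∏ j ∈ Finset.Ico n0 n, (a j)⁻¹)
    (hQ : ∀ n, Q n = α (n + 1) * b n / α (n + ℓ))
    (hlim :
      (((ℓ : ℝ) - 1) / (ℓ : ℝ)) ^ ℓ <
        Filter.liminf (fun n : ℤ => ∑ s ∈ Finset.Ico (n + 1) (n + ℓ), Q s) Filter.atTop ∨
      1 < Filter.limsup (fun n : ℤ => ∑ s ∈ Finset.Ico n (n + ℓ), Q s) Filter.atTop)
    (z : ℤ → ℝ)
    (heq : ∀ n : ℤ, z (n + 1) = a n * z n + b n * z (n + ℓ))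
    (hne : ∃ n, z n ≠ 0) :
    ∀ M : ℤ, ∃ n, M ≤ n ∧ z n * z (n + 1) ≤ 0 :=
  stmt_13_general n0 ℓ hℓ a b ha hb α Q hα hQ hlim z heq
end
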